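/- Let G be a group, let ρ₀, ρ₁, ρ₂ be representations of G on vector spaces V₀, V₁, V₂, and let κ₁: G → Hom(V₀,V₁), κ₂: G → Hom(V₁,V₂), κ₃: G → Hom(V₀,V₂) be functions such that the block lower-triangular matrix map ρ(g) = [[ρ₀(g),0,0],[κ₁(g),ρ₁(g),0],[κ₃(g),κ₂(g),ρ₂(g)]] is a group homomorphism. If c: G → Hom(V₀,V₂) is a 1-cocycle for the action g·f = ρ₂(g)∘f∘ρ₀(g)⁻¹, then the modified map g ↦ [[ρ₀(g),0,0],[κ₁(g),ρ₁(g),0],[κ₃(g)+c(g)∘ρ₀(g),κ₂(g),ρ₂(g)]] is also a group homomorphism. -/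

import Mathlib

/-- The block lower-triangular map `ρ(g) = [[ρ₀(g),0,0],[κ₁(g),ρ₁(g),0],[κ₃(g),κ₂(g),ρ₂(g)]]`
acting on `V₀ × V₁ × V₂`. -/
def blockFun {k G V₀ V₁ V₂ : Type*} [CommRing k] [Group G]
    [AddCommGroup V₀] [Module k V₀] [AddCommGroup V₁] [Module k V₁]
    [AddCommGroup V₂] [Module k V₂]
    (ρ₀ : Representation k G V₀) (ρ₁ : Representation k G V₁) (ρ₂ : Representation k G V₂)
    (κ₁ : G → (V₀ →ₗ[k] V₁)) (κ₂ : G → (V₁ →ₗ[k] V₂)) (κ₃ : G → (V₀ →ₗ[k] V₂))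
    (g : G) (x : V₀ × V₁ × V₂) : V₀ × V₁ × V₂ :=
  (ρ₀ g x.1, κ₁ g x.1 + ρ₁ g x.2.1, κ₃ g x.1 + κ₂ g x.2.1 + ρ₂ g x.2.2)

/-- If the block lower-triangular map `ρ` built from `ρ₀, ρ₁, ρ₂` and
`κ₁, κ₂, κ₃` is a group homomorphism, and `c : G → Hom(V₀, V₂)` is a 1-cocycle for the
conjugation action `g · f = ρ₂(g) ∘ f ∘ ρ₀(g)⁻¹`, then the map obtained by replacing `κ₃(g)`
with `κ₃(g) + c(g) ∘ ρ₀(g)` is also a group homomorphism. -/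
theorem blockFun_twist_is_hom {k G V₀ V₁ V₂ : Type*} [CommRing k] [Group G]
    [AddCommGroup V₀] [Module k V₀] [AddCommGroup V₁] [Module k V₁]
    [AddCommGroup V₂] [Module k V₂]
    (ρ₀ : Representation k G V₀) (ρ₁ : Representation k G V₁) (ρ₂ : Representation k G V₂)
    (κ₁ : G → (V₀ →ₗ[k] V₁)) (κ₂ : G → (V₁ →ₗ[k] V₂)) (κ₃ : G → (V₀ →ₗ[k] V₂))
    (hρ : ∀ g h x, blockFun ρ₀ ρ₁ ρ₂ κ₁ κ₂ κ₃ (g * h) x =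
      blockFun ρ₀ ρ₁ ρ₂ κ₁ κ₂ κ₃ g (blockFun ρ₀ ρ₁ ρ₂ κ₁ κ₂ κ₃ h x))
    (c : G → (V₀ →ₗ[k] V₂))
    (hc : ∀ g h, c (g * h) = c g + ρ₂ g ∘ₗ c h ∘ₗ ρ₀ g⁻¹) :
    ∀ g h x, blockFun ρ₀ ρ₁ ρ₂ κ₁ κ₂ (fun g => κ₃ g + c g ∘ₗ ρ₀ g) (g * h) x =
      blockFun ρ₀ ρ₁ ρ₂ κ₁ κ₂ (fun g => κ₃ g + c g ∘ₗ ρ₀ g) g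
        (blockFun ρ₀ ρ₁ ρ₂ κ₁ κ₂ (fun g => κ₃ g + c g ∘ₗ ρ₀ g) h x) := by
  intro g h x
  have H1 := congrArg (fun p : V₀ × V₁ × V₂ => p.1) (hρ g h x)
  have H2 := congrArg (fun p : V₀ × V₁ × V₂ => p.2.1) (hρ g h x)
  have H3 := congrArg (fun p : V₀ × V₁ × V₂ => p.2.2) (hρ g h x)
  simp only [blockFun] at H1 H2 H3 ⊢
  have hinv : ∀ v : V₀, ρ₀ g⁻¹ (ρ₀ g v) = v := by
    intro v
    rw [← Module.End.mul_apply, ← map_mul, inv_mul_cancel, map_one, Module.End.one_apply]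
  refine Prod.ext H1 (Prod.ext H2 ?_)
  simp only [LinearMap.add_apply, LinearMap.comp_apply, hc, map_add] at H3 ⊢
  simp only [H1, hinv]
  have H3' := congrArg
    (fun y => y + ((c g) ((ρ₀ g) ((ρ₀ h) x.1)) + (ρ₂ g) ((c h) ((ρ₀ h) x.1)))) H3
  refine Eq.trans ?_ (Eq.trans H3' ?_) <;> abel
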